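/- Let 0 < ε < 1/2, let r be a positive natural number, and let w_1, …, w_r be independent random variables, each uniformly distributed on [0,1]. Let X = #{ j : w_j < 1/2 − ε } and Y = #{ j : w_j > 1/2 + ε }. Then P(X ≥ r/2) = P(Y ≥ r/2) ≤ exp(−ε² r). -/

import Mathlib

/-!
The events `w_j < 1/2 - ε` are independent of probability `p = 1/2 - ε`, and so are the events
`w_j > 1/2 + ε`, so each of the two events in the statement has probability
`∑_{|S| ≥ r/2} p^|S| q^(r - |S|)` with `q = 1/2 + ε`, which gives the equality. Since `p ≤ q`,
every term with `|S| ≥ r/2` is at most `(pq)^(r/2)`, and there are at most `2^r` of them, so the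
sum is at most `(4pq)^(r/2) = (1 - 4ε²)^(r/2) ≤ exp(-2ε² r)`.
-/

open MeasureTheory ProbabilityTheory Finset

section IndependentEvents

variable {Ω ι β : Type*} [Fintype ι] [DecidableEq ι] {w : ι → Ω → β} {P : β → Prop}
  [DecidablePred P]

lemma setOf_filter_eq_eq_biInter (S : Finset ι) :
    {ω | univ.filter (fun j => P (w j ω)) = S} =
      ⋂ j ∈ univ, w j ⁻¹' (if j ∈ S then {x | P x} else {x | P x}ᶜ) := by
  ext ω
  simp only [Finset.ext_iff, mem_filter, mem_univ, true_and, Set.mem_ofPred_eq,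
    Set.mem_iInter, Set.mem_preimage]
  refine forall_congr' fun j => ?_
  split_ifs with hj <;> simp [hj]

variable [MeasurableSpace Ω] [MeasurableSpace β]

lemma measurableSet_ite_compl {s : Set β} {c : Prop} [Decidable c] (hs : MeasurableSet s) :
    MeasurableSet (if c then s else sᶜ) := by
  split_ifs
  exacts [hs, hs.compl]

variable {μ : Measure Ω} [IsProbabilityMeasure μ] {p : ENNReal}

lemma measure_filter_eq_pow_mul_pow (hmeas : ∀ j, Measurable (w j)) (hindep : iIndepFun w μ)
    (hP : MeasurableSet {x | P x}) (hp : ∀ j, μ (w j ⁻¹' {x | P x}) = p) (S : Finset ι) :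
    μ {ω | univ.filter (fun j => P (w j ω)) = S} = p ^ #S * (1 - p) ^ #Sᶜ := by
  have hprob : ∀ j, μ (w j ⁻¹' if j ∈ S then {x | P x} else {x | P x}ᶜ) =
      if j ∈ S then p else 1 - p := fun j => by
    split_ifs
    · exact hp j
    · rw [Set.preimage_compl, prob_compl_eq_one_sub (hmeas j hP), hp j]
  rw [setOf_filter_eq_eq_biInter,
    hindep.measure_inter_preimage_eq_mul univ fun j _ => measurableSet_ite_compl hP]
  simp [hprob, prod_ite, compl_eq_univ_sdiff, filter_not]

lemma measure_filter_mem_eq_sum (hmeas : ∀ j, Measurable (w j)) (hindep : iIndepFun w μ)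
    (hP : MeasurableSet {x | P x}) (hp : ∀ j, μ (w j ⁻¹' {x | P x}) = p)
    (Q : Finset ι → Prop) [DecidablePred Q] :
    μ {ω | Q (univ.filter fun j => P (w j ω))} = ∑ S ∈ univ.filter Q, p ^ #S * (1 - p) ^ #Sᶜ := by
  have hevent : {ω | Q (univ.filter fun j => P (w j ω))} =
      ⋃ S ∈ univ.filter Q, {ω | univ.filter (fun j => P (w j ω)) = S} := by
    ext ω; simp
  have hdisj : (↑(univ.filter Q) : Set (Finset ι)).PairwiseDisjoint
      fun S => {ω | univ.filter (fun j => P (w j ω)) = S} :=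
    fun S _ T _ hST => Set.disjoint_left.mpr fun ω hS hT => hST (hS.symm.trans hT)
  have hmeasS : ∀ S ∈ univ.filter Q,
      MeasurableSet {ω | univ.filter (fun j => P (w j ω)) = S} := fun S _ => by
    rw [setOf_filter_eq_eq_biInter]
    exact univ.measurableSet_biInter fun j _ => hmeas j (measurableSet_ite_compl hP)
  rw [hevent, measure_biUnion_finset hdisj hmeasS]
  exact sum_congr rfl fun S _ => measure_filter_eq_pow_mul_pow hmeas hindep hP hp S

lemma measure_filter_mem_eq_ofReal_sum (hmeas : ∀ j, Measurable (w j)) (hindep : iIndepFun w μ)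
    (hP : MeasurableSet {x | P x}) {p : ℝ} (hp0 : 0 ≤ p) (hp1 : p ≤ 1)
    (hp : ∀ j, μ (w j ⁻¹' {x | P x}) = ENNReal.ofReal p) (Q : Finset ι → Prop) [DecidablePred Q] :
    μ {ω | Q (univ.filter fun j => P (w j ω))} =
      ENNReal.ofReal (∑ S ∈ univ.filter Q, p ^ #S * (1 - p) ^ #Sᶜ) := by
  rw [measure_filter_mem_eq_sum hmeas hindep hP hp, ENNReal.ofReal_sum_of_nonneg fun S _ => by
    have := sub_nonneg.mpr hp1; positivity]
  refine sum_congr rfl fun S _ => ?_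
  rw [ENNReal.ofReal_mul (by positivity), ENNReal.ofReal_pow hp0,
    ENNReal.ofReal_pow (sub_nonneg.mpr hp1), ENNReal.ofReal_sub _ hp0, ENNReal.ofReal_one]

end IndependentEvents

section Uniform

variable {Ω : Type*} [MeasurableSpace Ω] {μ : Measure Ω} {X : Ω → ℝ}

lemma measure_preimage_Iio_of_map_eq_uniform (hX : Measurable X)
    (hunif : μ.map X = volume.restrict (Set.Icc 0 1)) {a : ℝ} (ha : a ≤ 1) :
    μ (X ⁻¹' Set.Iio a) = ENNReal.ofReal a := by
  have hinter : Set.Iio a ∩ Set.Icc 0 1 = Set.Ico 0 a := by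
    ext x; simp only [Set.mem_inter_iff, Set.mem_Iio, Set.mem_Icc, Set.mem_Ico]; grind
  rw [← Measure.map_apply hX measurableSet_Iio, hunif, Measure.restrict_apply measurableSet_Iio,
    hinter, Real.volume_Ico, sub_zero]

lemma measure_preimage_Ioi_of_map_eq_uniform (hX : Measurable X)
    (hunif : μ.map X = volume.restrict (Set.Icc 0 1)) {a : ℝ} (ha : 0 ≤ a) :
    μ (X ⁻¹' Set.Ioi a) = ENNReal.ofReal (1 - a) := by
  have hinter : Set.Ioi a ∩ Set.Icc 0 1 = Set.Ioc a 1 := by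
    ext x; simp only [Set.mem_inter_iff, Set.mem_Ioi, Set.mem_Icc, Set.mem_Ioc]; grind
  rw [← Measure.map_apply hX measurableSet_Ioi, hunif, Measure.restrict_apply measurableSet_Ioi,
    hinter, Real.volume_Ioc]

end Uniform

lemma pow_mul_pow_sq_le {p q : ℝ} (hp : 0 ≤ p) (hpq : p ≤ q) {j k : ℕ} (hjk : j ≤ k) :
    (p ^ k * q ^ j) ^ 2 ≤ (p * q) ^ (k + j) := by
  have hq := hp.trans hpq
  obtain ⟨d, rfl⟩ := Nat.exists_eq_add_of_le hjk
  calc (p ^ (j + d) * q ^ j) ^ 2 = p ^ (j + d + j) * q ^ (2 * j) * p ^ d := by ring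
    _ ≤ p ^ (j + d + j) * q ^ (2 * j) * q ^ d := by gcongr
    _ = (p * q) ^ (j + d + j) := by ring

lemma sum_pow_mul_pow_le_sqrt {ι : Type*} [Fintype ι] [DecidableEq ι] {p q : ℝ} (hp : 0 ≤ p)
    (hpq : p ≤ q) (T : Finset (Finset ι)) (hT : ∀ S ∈ T, Fintype.card ι ≤ 2 * #S) :
    ∑ S ∈ T, p ^ #S * q ^ #Sᶜ ≤ √((4 * p * q) ^ Fintype.card ι) := by
  set n := Fintype.card ι
  have hq := hp.trans hpq
  have hterm : ∀ S ∈ T, p ^ #S * q ^ #Sᶜ ≤ √((p * q) ^ n) := fun S hS => by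
    have hcard : #S + #Sᶜ = n := card_add_card_compl S
    refine Real.le_sqrt_of_sq_le ?_
    rw [← hcard]
    exact pow_mul_pow_sq_le hp hpq (by linarith [hT S hS])
  have hcard : (#T : ℝ) ≤ 2 ^ n := by
    exact_mod_cast (card_le_univ T).trans_eq (by simp [n])
  calc ∑ S ∈ T, p ^ #S * q ^ #Sᶜ ≤ #T * √((p * q) ^ n) := by
        simpa using sum_le_card_nsmul _ _ _ hterm
    _ ≤ 2 ^ n * √((p * q) ^ n) := by gcongr
    _ = √((4 * p * q) ^ n) := by
        rw [show (4 * p * q) ^ n = (2 ^ n) ^ 2 * (p * q) ^ n by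
            rw [← pow_mul, mul_comm _ 2, pow_mul, ← mul_pow]; norm_num [mul_assoc],
          Real.sqrt_mul (by positivity), Real.sqrt_sq (by positivity)]

lemma sqrt_one_sub_pow_le_exp {t : ℝ} (ht : t ≤ 1) (n : ℕ) :
    √((1 - t) ^ n) ≤ Real.exp (-(t * n / 2)) := by
  rw [Real.sqrt_le_left (Real.exp_nonneg _), ← Real.exp_nat_mul]
  calc (1 - t) ^ n ≤ Real.exp (-t) ^ n :=
        pow_le_pow_left₀ (by linarith) (by linarith [Real.add_one_le_exp (-t)]) n
    _ = _ := by rw [← Real.exp_nat_mul]; congr 1; push_cast; ring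

lemma sum_half_sub_pow_mul_half_add_pow_le_exp {ι : Type*} [Fintype ι] [DecidableEq ι] {ε : ℝ}
    (hε0 : 0 ≤ ε) (hε : ε ≤ 1 / 2) (T : Finset (Finset ι))
    (hT : ∀ S ∈ T, Fintype.card ι ≤ 2 * #S) :
    ∑ S ∈ T, (1 / 2 - ε) ^ #S * (1 / 2 + ε) ^ #Sᶜ ≤
      Real.exp (-(2 * ε ^ 2 * Fintype.card ι)) :=
  calc _ ≤ √((4 * (1 / 2 - ε) * (1 / 2 + ε)) ^ Fintype.card ι) :=
        sum_pow_mul_pow_le_sqrt (by linarith) (by linarith) T hT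
    _ = √((1 - 4 * ε ^ 2) ^ Fintype.card ι) := by ring_nf
    _ ≤ Real.exp (-(4 * ε ^ 2 * Fintype.card ι / 2)) := sqrt_one_sub_pow_le_exp (by nlinarith) _
    _ = Real.exp (-(2 * ε ^ 2 * Fintype.card ι)) := by ring_nf

theorem candidate_error_bound_general {Ω : Type*} [MeasurableSpace Ω] (μ : Measure Ω)
    [IsProbabilityMeasure μ] (ε : ℝ) (hε0 : 0 < ε) (hε : ε < 1 / 2)
    (r : ℕ) (w : Fin r → Ω → ℝ)
    (hmeas : ∀ j, Measurable (w j))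
    (hindep : iIndepFun w μ)
    (hunif : ∀ j, Measure.map (w j) μ = volume.restrict (Set.Icc (0 : ℝ) 1)) :
    μ {ω | (r : ℝ) / 2 ≤
        ((Finset.univ.filter fun j => w j ω < 1 / 2 - ε).card : ℝ)} =
      μ {ω | (r : ℝ) / 2 ≤
        ((Finset.univ.filter fun j => 1 / 2 + ε < w j ω).card : ℝ)} ∧
    μ {ω | (r : ℝ) / 2 ≤
        ((Finset.univ.filter fun j => w j ω < 1 / 2 - ε).card : ℝ)} ≤
      ENNReal.ofReal (Real.exp (-(ε ^ 2) * r)) := by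
  have hbelow (j : Fin r) : μ (w j ⁻¹' {x | x < 1 / 2 - ε}) = ENNReal.ofReal (1 / 2 - ε) :=
    measure_preimage_Iio_of_map_eq_uniform (hmeas j) (hunif j) (by linarith)
  have habove (j : Fin r) : μ (w j ⁻¹' {x | 1 / 2 + ε < x}) = ENNReal.ofReal (1 / 2 - ε) :=
    (measure_preimage_Ioi_of_map_eq_uniform (hmeas j) (hunif j) (by linarith)).trans
      (by congr 1; ring)
  have hX := measure_filter_mem_eq_ofReal_sum hmeas hindep measurableSet_Iio (by linarith)
    (by linarith) hbelow fun S => (r : ℝ) / 2 ≤ #S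
  have hY := measure_filter_mem_eq_ofReal_sum hmeas hindep measurableSet_Ioi (by linarith)
    (by linarith) habove fun S => (r : ℝ) / 2 ≤ #S
  refine ⟨hX.trans hY.symm, ?_⟩
  rw [hX, show (1 : ℝ) - (1 / 2 - ε) = 1 / 2 + ε by ring]
  refine ENNReal.ofReal_le_ofReal ?_
  calc _ ≤ Real.exp (-(2 * ε ^ 2 * Fintype.card (Fin r))) :=
        sum_half_sub_pow_mul_half_add_pow_le_exp hε0.le hε.le _ fun S hS => by
          rw [Fintype.card_fin]
          exact_mod_cast (by linarith [(mem_filter.mp hS).2] : (r : ℝ) ≤ 2 * #S)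
    _ ≤ Real.exp (-(ε ^ 2) * r) := by
        rw [Fintype.card_fin, Real.exp_le_exp]
        nlinarith [sq_nonneg ε, r.cast_nonneg (α := ℝ)]

/-- **Error bound for the Candidate** (Theorem 3 of the paper).
Let `0 < ε < 1/2`, let `w_1, …, w_r` be independent uniform-`[0,1]` random variables,
let `X = #{j : w_j < 1/2 − ε}` and `Y = #{j : w_j > 1/2 + ε}`.  Then
`P(X ≥ r/2) = P(Y ≥ r/2) ≤ exp(−ε² r)`. -/
theorem candidate_error_bound {Ω : Type*} [MeasurableSpace Ω] (μ : Measure Ω)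
    [IsProbabilityMeasure μ] (ε : ℝ) (hε0 : 0 < ε) (hε : ε < 1 / 2)
    (r : ℕ) (hr : 1 ≤ r) (w : Fin r → Ω → ℝ)
    (hmeas : ∀ j, Measurable (w j))
    (hindep : iIndepFun w μ)
    (hunif : ∀ j, Measure.map (w j) μ = volume.restrict (Set.Icc (0 : ℝ) 1)) :
    μ {ω | (r : ℝ) / 2 ≤
        ((Finset.univ.filter fun j => w j ω < 1 / 2 - ε).card : ℝ)} =
      μ {ω | (r : ℝ) / 2 ≤
        ((Finset.univ.filter fun j => 1 / 2 + ε < w j ω).card : ℝ)} ∧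
    μ {ω | (r : ℝ) / 2 ≤
        ((Finset.univ.filter fun j => w j ω < 1 / 2 - ε).card : ℝ)} ≤
      ENNReal.ofReal (Real.exp (-(ε ^ 2) * r)) :=
  candidate_error_bound_general μ ε hε0 hε r w hmeas hindep hunif
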